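/- Let e be a Hermite–Biehler function with s_0 ∈ ℬ(e). For every f ∈ ℬ(e) and every w ∈ ℂ, the entire extension F of z ↦ (s_0(w) f(z) − s_0(z) f(w))/(z − w) belongs to dom(S); that is, F ∈ ℬ(e) and the function z ↦ z·F(z) also belongs to ℬ(e). -/

import Mathlib

/-!
Put `G z := s₀(w) f(z) - s₀(z) f(w)`. Then `G ∈ ℬ(e)` because `ℬ(e)` is a vector space containing
`f` and `s₀`, and `G(w) = 0`, so `F = dslope G w` is entire with `F(z) = G(z)/(z - w)`. Dividing by
`z - w` keeps `G/e` and `G^#/e` in `H²`: far from `w` it only shrinks them, and near `w` the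
quotient `F/e` is continuous on the closed upper half-plane (`e` has no zeros there), hence bounded
on a compact piece, which contributes a bounded amount to every horizontal `L²` norm. Finally
`z F(z) = G(z) + w F(z)` lies in `ℬ(e)` as well.
-/

open Complex MeasureTheory Filter Topology
open scoped ENNReal Classical

noncomputable section

/-- `f^#(z) = conj (f (conj z))`. -/
def sharp (f : ℂ → ℂ) : ℂ → ℂ := fun z => (starRingEnd ℂ) (f ((starRingEnd ℂ) z))

/-- Hermite–Biehler function: entire, no real zeros, `|e(conj z)| < |e z)|` on the upper
half-plane. -/
def HermiteBiehler (e : ℂ → ℂ) : Prop :=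
  Differentiable ℂ e ∧ (∀ x : ℝ, e x ≠ 0) ∧
    ∀ z : ℂ, 0 < z.im → ‖e ((starRingEnd ℂ) z)‖ < ‖e z‖

/-- Hardy space `H²` of the upper half-plane. -/
def HardyH2 (f : ℂ → ℂ) : Prop :=
  DifferentiableOn ℂ f {z : ℂ | 0 < z.im} ∧
    ∃ C : ℝ≥0∞, C ≠ ⊤ ∧ ∀ y : ℝ, 0 < y →
      eLpNorm (fun x : ℝ => f (x + y * Complex.I)) 2 volume ≤ C

/-- Membership in the de Branges space `ℬ(e)`. -/
def MemDB (e f : ℂ → ℂ) : Prop :=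
  Differentiable ℂ f ∧ HardyH2 (fun z => f z / e z) ∧ HardyH2 (fun z => sharp f z / e z)

/-- The associated functions `s_β`. -/
def sFun (e : ℂ → ℂ) (β : ℝ) : ℂ → ℂ := fun z =>
  (Complex.I / 2) * (Complex.exp (Complex.I * β) * e z -
    Complex.exp (-(Complex.I * β)) * sharp e z)

/-- Integrand of the de Branges inner product `⟨g, f⟩`. -/
def dbItg (e g f : ℂ → ℂ) (x : ℝ) : ℂ :=
  (starRingEnd ℂ) (g x) * f x / ((‖e x‖ : ℂ)) ^ 2

/-- The domain of the canonical selfadjoint extension `S_β`, `β ∈ (0,π)`. -/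
def domS (e : ℂ → ℂ) (β : ℝ) : Set (ℂ → ℂ) :=
  {g | Differentiable ℂ g ∧ ∃ f : ℂ → ℂ, MemDB e f ∧ ∃ w : ℂ, ∀ z : ℂ, z ≠ w →
    g z = (sFun e β w * f z - sFun e β z * f w) / (Real.sin β * (z - w))}

open Set Metric ComplexConjugate

lemma Differentiable.sharp {f : ℂ → ℂ} (hf : Differentiable ℂ f) : Differentiable ℂ (sharp f) :=
  fun _ => differentiableAt_conj_conj_iff.mpr (hf _)

lemma Differentiable.dslope {f : ℂ → ℂ} (hf : Differentiable ℂ f) (w : ℂ) :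
    Differentiable ℂ (dslope f w) := by
  rw [← differentiableOn_univ] at hf ⊢
  exact (differentiableOn_dslope Filter.univ_mem).mpr hf

lemma sharp_dslope {f : ℂ → ℂ} (hf : Differentiable ℂ f) (w : ℂ) :
    sharp (dslope f w) = dslope (sharp f) (conj w) := by
  refine Continuous.ext_on (dense_compl_singleton (conj w)) (hf.dslope w).sharp.continuous
    (hf.sharp.dslope _).continuous fun z (hz : z ≠ conj w) => ?_
  have hz' : conj z ≠ w := fun h => hz (by rw [← h, conj_conj])
  simp only [sharp, dslope_of_ne _ hz, dslope_of_ne _ hz', slope_def_field, map_div₀, map_sub,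
    conj_conj]

lemma HermiteBiehler.ne_zero_of_im_nonneg {e : ℂ → ℂ} (he : HermiteBiehler e) {z : ℂ}
    (hz : 0 ≤ z.im) : e z ≠ 0 := by
  rcases hz.eq_or_lt with hz | hz
  · rw [← re_add_im z, ← hz, ofReal_zero, zero_mul, add_zero]
    exact he.2.1 z.re
  · intro h0
    exact (norm_nonneg _).not_gt (by simpa [h0] using he.2.2 z hz)

lemma continuous_horizontal_line {f : ℂ → ℂ} (hf : DifferentiableOn ℂ f {z : ℂ | 0 < z.im})
    {y : ℝ} (hy : 0 < y) : Continuous fun x : ℝ => f (x + y * I) :=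
  hf.continuousOn.comp_continuous (by fun_prop) fun x => by simpa using hy

lemma HardyH2.const_mul {f : ℂ → ℂ} (hf : HardyH2 f) (c : ℂ) : HardyH2 fun z => c * f z := by
  obtain ⟨hd, C, hC, hB⟩ := hf
  refine ⟨hd.const_mul c, ‖c‖ₑ * C, ENNReal.mul_ne_top enorm_ne_top hC, fun y hy => ?_⟩
  calc eLpNorm (c • fun x : ℝ => f (x + y * I)) 2 volume
      = ‖c‖ₑ * eLpNorm (fun x : ℝ => f (x + y * I)) 2 volume := eLpNorm_const_smul _ _ _ _
    _ ≤ ‖c‖ₑ * C := by gcongr; exact hB y hy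

lemma HardyH2.add {f g : ℂ → ℂ} (hf : HardyH2 f) (hg : HardyH2 g) :
    HardyH2 fun z => f z + g z := by
  obtain ⟨hdf, C, hC, hBf⟩ := hf
  obtain ⟨hdg, D, hD, hBg⟩ := hg
  refine ⟨hdf.add hdg, C + D, ENNReal.add_ne_top.mpr ⟨hC, hD⟩, fun y hy => ?_⟩
  calc eLpNorm ((fun x : ℝ => f (x + y * I)) + fun x : ℝ => g (x + y * I)) 2 volume
      ≤ eLpNorm (fun x : ℝ => f (x + y * I)) 2 volume
        + eLpNorm (fun x : ℝ => g (x + y * I)) 2 volume :=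
        eLpNorm_add_le (continuous_horizontal_line hdf hy).aestronglyMeasurable
          (continuous_horizontal_line hdg hy).aestronglyMeasurable one_le_two
    _ ≤ C + D := add_le_add (hBf y hy) (hBg y hy)

lemma MemDB.const_mul {e f : ℂ → ℂ} (hf : MemDB e f) (c : ℂ) : MemDB e fun z => c * f z := by
  obtain ⟨hd, h, h'⟩ := hf
  refine ⟨hd.const_mul c, ?_, ?_⟩
  · simpa only [mul_div_assoc] using h.const_mul c
  · simpa only [sharp, map_mul, mul_div_assoc] using h'.const_mul (conj c)

lemma MemDB.add {e f g : ℂ → ℂ} (hf : MemDB e f) (hg : MemDB e g) :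
    MemDB e fun z => f z + g z := by
  obtain ⟨hdf, hf, hf'⟩ := hf
  obtain ⟨hdg, hg, hg'⟩ := hg
  refine ⟨hdf.add hdg, ?_, ?_⟩
  · simpa only [add_div] using hf.add hg
  · simpa only [sharp, map_add, add_div] using hf'.add hg'

lemma norm_dslope_le_of_one_le_norm_sub {h : ℂ → ℂ} {w z : ℂ} (hw : h w = 0)
    (hz : 1 ≤ ‖z - w‖) : ‖dslope h w z‖ ≤ ‖h z‖ := by
  have hzw : z ≠ w := by rintro rfl; norm_num at hz
  rw [dslope_of_ne _ hzw, slope_def_field, hw, sub_zero, norm_div]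
  exact div_le_self (norm_nonneg _) hz

lemma eLpNorm_le_eLpNorm_indicator_const_add {α F : Type*} [MeasurableSpace α] {μ : Measure α}
    [NormedAddCommGroup F] {p : ℝ≥0∞} (hp : 1 ≤ p) {f g : α → F} (hg : AEStronglyMeasurable g μ)
    {s : Set α} (hs : MeasurableSet s) {M : ℝ}
    (hfg : ∀ x, ‖f x‖ ≤ s.indicator (fun _ => M) x + ‖g x‖) :
    eLpNorm f p μ ≤ eLpNorm (s.indicator fun _ => M) p μ + eLpNorm g p μ := by
  calc eLpNorm f p μ ≤ eLpNorm (fun x => s.indicator (fun _ => M) x + ‖g x‖) p μ :=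
        eLpNorm_mono_real hfg
    _ ≤ eLpNorm (s.indicator fun _ => M) p μ + eLpNorm (fun x => ‖g x‖) p μ :=
        eLpNorm_add_le (aestronglyMeasurable_const.indicator hs) hg.norm hp
    _ = _ := by rw [eLpNorm_norm]

lemma norm_dslope_div_le_indicator_add {e h : ℂ → ℂ} {w : ℂ} (hw : h w = 0) {s : Set ℂ} {M : ℝ}
    (hM : ∀ z ∈ closedBall w 1 ∩ s, ‖dslope h w z / e z‖ ≤ M) {z : ℂ} (hz : z ∈ s) :
    ‖dslope h w z / e z‖
      ≤ (Icc (w.re - 1) (w.re + 1)).indicator (fun _ => max M 0) z.re + ‖h z / e z‖ := by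
  rcases lt_or_ge ‖z - w‖ 1 with hnear | hfar
  · have hre : z.re ∈ Icc (w.re - 1) (w.re + 1) := by
      obtain ⟨h₁, h₂⟩ := abs_le.mp (by simpa using (abs_re_le_norm (z - w)).trans hnear.le)
      constructor <;> linarith
    rw [indicator_of_mem hre]
    have := hM z ⟨mem_closedBall_iff_norm.mpr hnear.le, hz⟩
    linarith [le_max_left M 0, norm_nonneg (h z / e z)]
  · have := indicator_nonneg (s := Icc (w.re - 1) (w.re + 1)) (fun _ _ => le_max_right M 0) z.re
    rw [norm_div, norm_div]
    have := div_le_div_of_nonneg_right (norm_dslope_le_of_one_le_norm_sub hw hfar)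
      (norm_nonneg (e z))
    linarith

lemma HardyH2.dslope_div {e h : ℂ → ℂ} {w : ℂ} (he : Differentiable ℂ e)
    (he0 : ∀ z : ℂ, 0 ≤ z.im → e z ≠ 0) (hh : Differentiable ℂ h) (hw : h w = 0)
    (H : HardyH2 fun z => h z / e z) : HardyH2 fun z => dslope h w z / e z := by
  obtain ⟨hH, C, hC, hB⟩ := H
  have hcont : ContinuousOn (fun z => dslope h w z / e z) {z : ℂ | 0 ≤ z.im} :=
    (hh.dslope w).continuous.continuousOn.div he.continuous.continuousOn he0
  obtain ⟨M, hM⟩ := ((isCompact_closedBall w 1).inter_right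
    (isClosed_le continuous_const continuous_im)).exists_bound_of_continuousOn
      (hcont.mono inter_subset_right)
  set s := Icc (w.re - 1) (w.re + 1)
  have hs : eLpNorm (s.indicator fun _ => max M 0) 2 volume ≠ ⊤ :=
    (memLp_indicator_const 2 measurableSet_Icc _ (Or.inr measure_Icc_lt_top.ne)).eLpNorm_ne_top
  refine ⟨(hh.dslope w).differentiableOn.div he.differentiableOn fun z hz => he0 z hz.le,
    eLpNorm (s.indicator fun _ => max M 0) 2 volume + C, ENNReal.add_ne_top.mpr ⟨hs, hC⟩,
    fun y hy => ?_⟩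
  calc eLpNorm (fun x : ℝ => dslope h w (x + y * I) / e (x + y * I)) 2 volume
      ≤ eLpNorm (s.indicator fun _ => max M 0) 2 volume
        + eLpNorm (fun x : ℝ => h (x + y * I) / e (x + y * I)) 2 volume :=
        eLpNorm_le_eLpNorm_indicator_const_add one_le_two
          (continuous_horizontal_line hH hy).aestronglyMeasurable measurableSet_Icc fun x => by
            simpa using norm_dslope_div_le_indicator_add hw hM (z := x + y * I) (by simp [hy.le])
    _ ≤ _ := by gcongr; exact hB y hy

lemma MemDB.dslope {e G : ℂ → ℂ} (he : HermiteBiehler e) (hG : MemDB e G) {w : ℂ}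
    (hGw : G w = 0) : MemDB e (dslope G w) := by
  obtain ⟨hd, h, h'⟩ := hG
  have he0 : ∀ z : ℂ, 0 ≤ z.im → e z ≠ 0 := fun _ => he.ne_zero_of_im_nonneg
  refine ⟨hd.dslope w, h.dslope_div he.1 he0 hd hGw, ?_⟩
  rw [sharp_dslope hd]
  exact h'.dslope_div he.1 he0 hd.sharp (by simp [sharp, hGw])

lemma mul_dslope_eq_add_mul_dslope {G : ℂ → ℂ} {w : ℂ} (hGw : G w = 0) :
    (fun z => z * dslope G w z) = fun z => G z + w * dslope G w z := by
  funext z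
  rcases eq_or_ne z w with rfl | hz
  · rw [hGw, zero_add]
  · rw [dslope_of_ne _ hz, slope_def_field, hGw, sub_zero]
    field_simp [sub_ne_zero.mpr hz]
    ring

/-- For `f ∈ ℬ(e)` and `w ∈ ℂ`, the entire extension of
`z ↦ (s₀(w) f(z) - s₀(z) f(w))/(z - w)` belongs to `dom S`. -/
theorem difference_quotient_mem_domS (e : ℂ → ℂ) (he : HermiteBiehler e)
    (hs0 : MemDB e (sFun e 0)) (f : ℂ → ℂ) (hf : MemDB e f) (w : ℂ) :
    ∃ F : ℂ → ℂ, Differentiable ℂ F ∧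
      (∀ z : ℂ, z ≠ w → F z = (sFun e 0 w * f z - sFun e 0 z * f w) / (z - w)) ∧
      MemDB e F ∧ MemDB e (fun z => z * F z) := by
  set G : ℂ → ℂ := fun z => sFun e 0 w * f z - sFun e 0 z * f w
  have hG : MemDB e G := by
    convert (hf.const_mul (sFun e 0 w)).add (hs0.const_mul (-f w)) using 2
    ring
  have hGw : G w = 0 := sub_self _
  have hF : MemDB e (dslope G w) := hG.dslope he hGw
  refine ⟨dslope G w, hF.1, fun z hz => by rw [dslope_of_ne _ hz, slope_def_field, hGw,
    sub_zero], hF, ?_⟩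
  rw [mul_dslope_eq_add_mul_dslope hGw]
  exact hG.add (hF.const_mul w)
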